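/- In the sophisticated rock-throwing model M′ with binary endogenous variables ST, BT, SH, BH, BS, exogenous variable U, equations ST = U, BT = U, SH = ST, BH = BT ∧ ¬SH, BS = SH ∨ BH, and context u in which U makes both ST = 1 and BT = 1: ST = 1 is a cause of BS = 1 in (M′, u), but BT = 1 is not a cause of BS = 1 in (M′, u), under the updated HP definition. -/

import Mathlib

/-! ### Causal models (finitely presented) -/

/-- A finitely presented causal model over a signature `(U, V, R)`:
`rU` lists the range sizes of the exogenous variables `U` (a variable with
range size `r` takes values in `{0, …, r-1}`), `rV` those of the endogenous
variables `V`, and `tables` presents, for each endogenous variable, the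
structural equation `F_X` as a finite table.  A table `t` applied to a total
assignment `a` (a list of values, exogenous variables first) yields the value
`evalTable t a = t.getD (Encodable.encode a + 1) (t.headD 0)`. -/
structure CM : Type where
  rU : List ℕ
  rV : List ℕ
  tables : List (List ℕ)

/-- The number of exogenous variables. -/
def CM.nU (M : CM) : ℕ := M.rU.length

/-- The number of endogenous variables. -/
def CM.nV (M : CM) : ℕ := M.rV.length

/-- The value a table assigns to a total assignment. -/
def evalTable (t : List ℕ) (a : List ℕ) : ℕ :=
  t.getD (Encodable.encode a + 1) (t.headD 0)

/-- One simultaneous application of the structural equations to the endogenous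
assignment `v`, under the intervention `I` (where `I i = some c` means that
endogenous variable `i` has been set to `c`), in context `u`. -/
def CM.step (M : CM) (I : ℕ → Option ℕ) (u v : List ℕ) : List ℕ :=
  (List.range M.nV).map fun i =>
    (I i).getD (evalTable (M.tables.getD i []) (u ++ v))

/-- The solution of the equations of `M` under intervention `I` in context `u`
(unique for recursive models), as an assignment to the endogenous
variables. -/
def CM.solve (M : CM) (I : ℕ → Option ℕ) (u : List ℕ) : List ℕ :=
  (fun v => M.step I u v)^[M.nV + 1] (List.replicate M.nV 0)

/-- The actual value of endogenous variable `i` in `(M, u)`. -/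
def CM.val (M : CM) (u : List ℕ) (i : ℕ) : ℕ :=
  (M.solve (fun _ => none) u).getD i 0

/-- Boolean combinations of primitive events `X = x`, where `X` is (the index
of) an endogenous variable. -/
inductive CForm : Type
  | eq : ℕ → ℕ → CForm
  | not : CForm → CForm
  | and : CForm → CForm → CForm
  | or : CForm → CForm → CForm

/-- Satisfaction of a formula by an assignment `v` to the endogenous
variables. -/
def CForm.sat (v : List ℕ) : CForm → Prop
  | .eq i x => v.getD i 0 = x
  | .not φ => ¬ CForm.sat v φ
  | .and φ ψ => CForm.sat v φ ∧ CForm.sat v ψ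
  | .or φ ψ => CForm.sat v φ ∨ CForm.sat v ψ

/-- `(M, u⃗) ⊨ [I]φ`: `φ` holds in the solution of the equations of `M` as
modified by the intervention `I`, in context `u`. -/
def CM.holds (M : CM) (u : List ℕ) (I : ℕ → Option ℕ) (φ : CForm) : Prop :=
  CForm.sat (M.solve I u) φ

/-- The value assigned to variable `i` by the conjunction `X⃗ = x⃗`. -/
def xOf (Xs xs : List ℕ) (i : ℕ) : ℕ := xs.getD (Xs.idxOf i) 0

/-- The intervention `X⃗ ← x⃗, W' ← w, Z' ← z⃗*`, where `z⃗*` records the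
actual values of the variables in `(M, u)`. -/
def intv (M : CM) (u : List ℕ) (Xs xs : List ℕ) (W' : Finset ℕ) (w : ℕ → ℕ)
    (Z' : Finset ℕ) : ℕ → Option ℕ := fun i =>
  if i ∈ Xs then some (xOf Xs xs i)
  else if i ∈ W' then some (w i)
  else if i ∈ Z' then some (M.val u i)
  else none

/-- The set of endogenous variables of `M`. -/
def CM.endo (M : CM) : Finset ℕ := Finset.range M.nV

/-- AC1: `X⃗ = x⃗` and `φ` both hold in `(M, u⃗)`. -/
def AC1 (M : CM) (u : List ℕ) (φ : CForm) (Xs xs : List ℕ) : Prop :=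
  (∀ k, k < Xs.length → M.val u (Xs.getD k 0) = xs.getD k 0) ∧
  M.holds u (fun _ => none) φ

/-- AC2 of the updated HP definition, with a specific witness `(W⃗, x⃗', w⃗)`.
Here `W` is a set of endogenous variables disjoint from `X⃗` (so that
`(Z⃗, W⃗)` with `Z⃗` the complement of `W⃗` is a partition of `V` with
`X⃗ ⊆ Z⃗`), `x'` is a setting of `X⃗` and `w` a setting of `W⃗` (settings take
values in the ranges of the respective variables), such that:
(a) `(M, u⃗) ⊨ [X⃗ ← x⃗', W⃗ ← w⃗]¬φ`; and
(b) `(M, u⃗) ⊨ [X⃗ ← x⃗, W⃗' ← w⃗, Z⃗' ← z⃗*]φ` for all subsets `W⃗'` of `W⃗`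
    and all subsets `Z⃗'` of `Z⃗ \ X⃗`, where `z⃗*` gives the actual values in
    `(M, u⃗)`. -/
def AC2With (M : CM) (u : List ℕ) (φ : CForm) (Xs xs : List ℕ)
    (W : Finset ℕ) (x' : List ℕ) (w : ℕ → ℕ) : Prop :=
  W ⊆ M.endo ∧ (∀ i ∈ Xs, i ∉ W) ∧
  x'.length = Xs.length ∧
  (∀ k, k < Xs.length → x'.getD k 0 < M.rV.getD (Xs.getD k 0) 0) ∧
  (∀ i ∈ W, w i < M.rV.getD i 0) ∧
  ¬ M.holds u (intv M u Xs x' W w ∅) φ ∧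
  (∀ W' ⊆ W, ∀ Z' ⊆ (M.endo \ W) \ Xs.toFinset,
    M.holds u (intv M u Xs xs W' w Z') φ)

/-- AC2 of the updated HP definition. -/
def AC2 (M : CM) (u : List ℕ) (φ : CForm) (Xs xs : List ℕ) : Prop :=
  ∃ W x' w, AC2With M u φ Xs xs W x' w

/-- AC3: minimality — no strict sub-conjunction of `X⃗ = x⃗` satisfies AC2. -/
def AC3 (M : CM) (u : List ℕ) (φ : CForm) (Xs xs : List ℕ) : Prop :=
  ∀ Ys ys : List ℕ, Ys.length = ys.length →
    List.Sublist (Ys.zip ys) (Xs.zip xs) → Ys.zip ys ≠ Xs.zip xs → ¬ AC2 M u φ Ys ys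

/-- `X⃗ = x⃗` is an actual cause of `φ` in `(M, u⃗)` (updated HP
definition). -/
def IsCause (M : CM) (u : List ℕ) (φ : CForm) (Xs xs : List ℕ) : Prop :=
  AC1 M u φ Xs xs ∧ AC2 M u φ Xs xs ∧ AC3 M u φ Xs xs

/-- A total assignment (to all variables, exogenous first) respecting the
variable ranges. -/
def CM.ValidAssign (M : CM) (a : List ℕ) : Prop :=
  a.length = M.nU + M.nV ∧
  ∀ k, k < a.length → a.getD k 0 < (M.rU ++ M.rV).getD k 0

/-- Well-formedness of the presentation: one table per endogenous variable,
nonempty ranges, and all equations produce values in range. -/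
def CM.WellFormed (M : CM) : Prop :=
  M.tables.length = M.nV ∧ (∀ r ∈ M.rU, 1 ≤ r) ∧ (∀ r ∈ M.rV, 1 ≤ r) ∧
  ∀ i, i < M.nV → ∀ a, M.ValidAssign a →
    evalTable (M.tables.getD i []) a < M.rV.getD i 0

/-- The structural equation of endogenous variable `i` depends on position `k`
of the total assignment. -/
def CM.DependsOn (M : CM) (i k : ℕ) : Prop :=
  ∃ a b, M.ValidAssign a ∧ M.ValidAssign b ∧
    (∀ m, m ≠ k → a.getD m 0 = b.getD m 0) ∧
    evalTable (M.tables.getD i []) a ≠ evalTable (M.tables.getD i []) b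

/-- `M` is recursive: the dependency graph of the causal network is acyclic,
i.e., the endogenous variables can be linearly ordered so that each equation
depends only on earlier variables (and the exogenous variables). -/
def CM.Recursive (M : CM) : Prop :=
  ∃ ord : List ℕ, ord.Nodup ∧ (∀ j, j < M.nV → j ∈ ord) ∧
    ∀ i j, i < M.nV → j < M.nV → M.DependsOn i (M.nU + j) →
      ord.idxOf j < ord.idxOf i

/-- A binary causal model: every variable has exactly two possible values. -/
def CM.Binary (M : CM) : Prop := (∀ r ∈ M.rU, r = 2) ∧ (∀ r ∈ M.rV, r = 2)

/-- A context: a setting of the exogenous variables, within their ranges. -/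
def CM.ValidContext (M : CM) (u : List ℕ) : Prop :=
  u.length = M.nU ∧ ∀ k, k < u.length → u.getD k 0 < M.rU.getD k 0

/-! ### Explicit construction of tables -/

/-- All 0/1-valued lists of length `n`. -/
def binLists : ℕ → List (List ℕ)
  | 0 => [[]]
  | (n+1) => (binLists n).flatMap fun l => [0 :: l, 1 :: l]

/-- A finite table presenting the function `f` on all 0/1 assignments of
length `n`: `evalTable (mkTable n f) a = f a` for every `a ∈ binLists n`. -/
def mkTable (n : ℕ) (f : List ℕ → ℕ) : List ℕ :=
  let dom := binLists n
  let m := ((dom.map fun a => Encodable.encode a + 1).foldr max 0) + 1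
  (List.range m).map fun idx =>
    match dom.find? (fun a => Encodable.encode a + 1 == idx) with
    | some a => f a
    | none => 0

/-- The sophisticated rock-throwing model: a single binary exogenous variable
`U` and binary endogenous variables `ST` (0), `BT` (1), `SH` (2), `BH` (3),
`BS` (4), with equations `ST = U`, `BT = U`, `SH = ST`, `BH = BT ∧ ¬SH`,
`BS = SH ∨ BH`.  (In a total assignment, position 0 is `U` and positions
1,…,5 are `ST`, `BT`, `SH`, `BH`, `BS`.) -/
def rockSoph : CM :=
  ⟨[2], [2, 2, 2, 2, 2],
    [mkTable 6 (fun a => a.getD 0 0),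
     mkTable 6 (fun a => a.getD 0 0),
     mkTable 6 (fun a => a.getD 1 0),
     mkTable 6 (fun a => min (a.getD 2 0) (1 - a.getD 3 0)),
     mkTable 6 (fun a => max (a.getD 3 0) (a.getD 4 0))]⟩


/-!
In context `U = 1`, under any 0/1 intervention, the iteration performed by `CM.solve` reaches the
solution obtained by evaluating `ST, BT, SH, BH, BS` in causal order, so every intervened world is
explicit. For `ST = 1`, take `W = {BT}` with `BT ← 0`: nothing hits the bottle, while with `ST = 1`
restored, `SH = 1` forces `BS = 1` whichever of `SH, BH, BS` are frozen at their actual values.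
For `BT = 1` every AC2 witness fails, because freezing `BH` at its actual value `0` cuts the only
path from `BT` to `BS`. AC3 is automatic for a single conjunct, since the empty conjunction never
satisfies AC2.
-/

theorem Set.EqOn.iterate {α : Type*} {f g : α → α} {s : Set α} (hfg : Set.EqOn f g s)
    (hg : Set.MapsTo g s s) : ∀ n, Set.EqOn f^[n] g^[n] s
  | 0 => fun _ _ => rfl
  | n + 1 => fun x hx => by
    rw [Function.iterate_succ_apply, Function.iterate_succ_apply, hfg hx]
    exact Set.EqOn.iterate hfg hg n (hg hx)

theorem List.getD_le_of_forall_mem_le {l : List ℕ} {b : ℕ} (hl : ∀ x ∈ l, x ≤ b) (k : ℕ) :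
    l.getD k 0 ≤ b := by
  rw [List.getD_eq_getElem?_getD]
  cases h : l[k]? with
  | none => exact Nat.zero_le b
  | some x => exact hl x (List.mem_of_getElem? h)

theorem mem_binLists_length {l : List ℕ} (hl : ∀ x ∈ l, x ≤ 1) : l ∈ binLists l.length := by
  induction l with
  | nil => simp [binLists]
  | cons y t ih =>
    rw [List.forall_mem_cons] at hl
    simp only [List.length_cons, binLists, List.mem_flatMap]
    refine ⟨t, ih hl.2, ?_⟩
    rcases Nat.le_one_iff_eq_zero_or_eq_one.mp hl.1 with rfl | rfl <;> simp

theorem evalTable_mkTable {n : ℕ} (f : List ℕ → ℕ) {a : List ℕ} (ha : a ∈ binLists n) :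
    evalTable (mkTable n f) a = f a := by
  have hlt : Encodable.encode a + 1 <
      ((binLists n).map fun a => Encodable.encode a + 1).foldr max 0 + 1 :=
    Nat.lt_succ_of_le (List.le_max_of_le' 0 (List.mem_map_of_mem ha) le_rfl)
  obtain ⟨b, hb⟩ : ∃ b, (binLists n).find?
      (fun b => Encodable.encode b == Encodable.encode a) = some b :=
    Option.isSome_iff_exists.mp (List.find?_isSome.mpr ⟨a, ha, by simp⟩)
  obtain rfl : b = a := Encodable.encode_injective (by simpa using List.find?_some hb)
  simp [evalTable, mkTable, List.getD_eq_getElem?_getD, hlt, hb]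

def BinaryIntervention (I : ℕ → Option ℕ) : Prop := ∀ i c, I i = some c → c ≤ 1

def binaryLists (n : ℕ) : Set (List ℕ) := {v | v.length = n ∧ ∀ x ∈ v, x ≤ 1}

theorem BinaryIntervention.getD_le_one {I : ℕ → Option ℕ} (hI : BinaryIntervention I)
    {d : ℕ} (hd : d ≤ 1) (i : ℕ) : (I i).getD d ≤ 1 := by
  cases h : I i with
  | none => exact hd
  | some c => exact hI i c h

theorem intv_eq_none_or_val {M : CM} {u Xs xs : List ℕ} {W' : Finset ℕ} {w : ℕ → ℕ}
    {Z' : Finset ℕ} {i : ℕ} (hX : i ∉ Xs) (hW : i ∉ W') :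
    intv M u Xs xs W' w Z' i = none ∨ intv M u Xs xs W' w Z' i = some (M.val u i) := by
  by_cases hZ : i ∈ Z' <;> simp [intv, hX, hW, hZ]

theorem intv_binary {M : CM} {u Xs xs : List ℕ} {W' : Finset ℕ} {w : ℕ → ℕ} {Z' : Finset ℕ}
    (hxs : ∀ k < Xs.length, xs.getD k 0 ≤ 1) (hw : ∀ i ∈ W', w i ≤ 1)
    (hval : ∀ i, M.val u i ≤ 1) : BinaryIntervention (intv M u Xs xs W' w Z') := by
  intro i c h
  unfold intv at h
  split_ifs at h with hX hW <;> cases h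
  · exact hxs _ (List.idxOf_lt_length_iff.mpr hX)
  · exact hw i hW
  · exact hval i

theorem not_AC2_nil (M : CM) (u : List ℕ) (φ : CForm) : ¬ AC2 M u φ [] [] := by
  rintro ⟨W, x', w, -, -, -, -, -, hnot, hholds⟩
  have hsame : intv M u [] x' W w ∅ = intv M u [] [] W w ∅ := by
    funext i
    simp [intv]
  exact hnot (hsame ▸ hholds W subset_rfl ∅ (Finset.empty_subset _))

theorem AC3_singleton (M : CM) (u : List ℕ) (φ : CForm) (X x : ℕ) : AC3 M u φ [X] [x] := by
  intro Ys ys hlen hsub hne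
  rcases List.sublist_singleton.mp hsub with hnil | heq
  · obtain ⟨rfl, rfl⟩ : Ys = [] ∧ ys = [] := by
      rcases List.zip_eq_nil_iff.mp hnil with rfl | rfl <;> simp_all [eq_comm]
    exact not_AC2_nil M u φ
  · exact absurd heq hne

/-- The simultaneous update `rockSoph.step I [1]` in closed form, valid on 0/1 lists
(the tables of `mkTable` are only faithful on `binLists 6`). -/
def rockStep (I : ℕ → Option ℕ) (v : List ℕ) : List ℕ :=
  [(I 0).getD 1, (I 1).getD 1, (I 2).getD (v.getD 0 0),
    (I 3).getD (min (v.getD 1 0) (1 - v.getD 2 0)), (I 4).getD (max (v.getD 2 0) (v.getD 3 0))]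

/-- The solution of `rockSoph` in context `U = 1` under `I`, solved in the causal order
`ST, BT, SH, BH, BS`. -/
def rockSol (I : ℕ → Option ℕ) : List ℕ :=
  let st := (I 0).getD 1
  let bt := (I 1).getD 1
  let sh := (I 2).getD st
  let bh := (I 3).getD (min bt (1 - sh))
  [st, bt, sh, bh, (I 4).getD (max sh bh)]

theorem rockSoph_step (I : ℕ → Option ℕ) {v : List ℕ} (hv : v ∈ binaryLists 5) :
    rockSoph.step I [1] v = rockStep I v := by
  have hmem : 1 :: v ∈ binLists 6 := by
    simpa [hv.1] using mem_binLists_length (l := 1 :: v) (List.forall_mem_cons.2 ⟨le_rfl, hv.2⟩)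
  simp only [CM.step, CM.nV, rockSoph, List.length_cons, List.length_nil, List.range_succ,
    List.range_zero, List.nil_append, List.cons_append, List.map_cons, List.map_nil,
    List.getD_cons_zero, List.getD_cons_succ]
  simp only [evalTable_mkTable _ hmem]
  rfl

theorem rockStep_mapsTo {I : ℕ → Option ℕ} (hI : BinaryIntervention I) :
    Set.MapsTo (rockStep I) (binaryLists 5) (binaryLists 5) := by
  rintro v ⟨-, hv⟩
  have h := List.getD_le_of_forall_mem_le hv
  refine ⟨rfl, ?_⟩
  simp only [rockStep, List.forall_mem_cons, List.not_mem_nil, IsEmpty.forall_iff, implies_true,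
    and_true]
  exact ⟨hI.getD_le_one le_rfl 0, hI.getD_le_one le_rfl 1, hI.getD_le_one (h 0) 2,
    hI.getD_le_one ((min_le_right _ _).trans (Nat.sub_le 1 _)) 3,
    hI.getD_le_one (max_le (h 2) (h 3)) 4⟩

theorem rockSoph_solve {I : ℕ → Option ℕ} (hI : BinaryIntervention I) :
    rockSoph.solve I [1] = rockSol I := by
  have hzero : List.replicate 5 0 ∈ binaryLists 5 := ⟨rfl, by simp⟩
  calc rockSoph.solve I [1] = (rockStep I)^[6] (List.replicate 5 0) :=
        Set.EqOn.iterate (fun _ hv => rockSoph_step I hv) (rockStep_mapsTo hI) 6 hzero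
    _ = rockSol I := rfl

theorem rockSoph_val (i : ℕ) : rockSoph.val [1] i = [1, 1, 1, 0, 1].getD i 0 := by
  rw [CM.val, rockSoph_solve (fun _ _ h => by cases h)]
  rfl

theorem rockSoph_val_le_one (i : ℕ) : rockSoph.val [1] i ≤ 1 :=
  rockSoph_val i ▸ List.getD_le_of_forall_mem_le (by decide) i

theorem rockSoph_rV_getD_le (i : ℕ) : rockSoph.rV.getD i 0 ≤ 2 :=
  List.getD_le_of_forall_mem_le (by decide) i

theorem rockSoph_holds_iff {I : ℕ → Option ℕ} (hI : BinaryIntervention I) :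
    rockSoph.holds [1] I (.eq 4 1) ↔ (rockSol I).getD 4 0 = 1 := by
  rw [CM.holds, rockSoph_solve hI]
  rfl

theorem rockSol_getD_four_of_st {I : ℕ → Option ℕ} (hST : I 0 = some 1)
    (hSH : I 2 = none ∨ I 2 = some 1) (hBH : I 3 = none ∨ I 3 = some 0)
    (hBS : I 4 = none ∨ I 4 = some 1) : (rockSol I).getD 4 0 = 1 := by
  rcases hSH with h2 | h2 <;> rcases hBH with h3 | h3 <;> rcases hBS with h4 | h4 <;>
    simp [rockSol, hST, h2, h3, h4]

theorem rockSoph_AC1_suzy : AC1 rockSoph [1] (.eq 4 1) [0] [1] := by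
  refine ⟨fun k hk => ?_, ?_⟩
  · obtain rfl : k = 0 := by simpa using hk
    exact rockSoph_val 0
  · exact (rockSoph_holds_iff fun _ _ h => by cases h).mpr rfl

theorem rockSoph_AC2_suzy : AC2 rockSoph [1] (.eq 4 1) [0] [1] := by
  refine ⟨{1}, [0], fun _ => 0, by decide, by decide, rfl, by decide, by decide, ?_, ?_⟩
  · rw [rockSoph_holds_iff (intv_binary (by simp) (by simp) rockSoph_val_le_one)]
    simp [rockSol, intv, xOf]
  · intro W' hW' Z' _
    have hactual : ∀ i, 2 ≤ i → intv rockSoph [1] [0] [1] W' (fun _ => 0) Z' i = none ∨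
        intv rockSoph [1] [0] [1] W' (fun _ => 0) Z' i = some ([1, 1, 1, 0, 1].getD i 0) :=
      fun i hi => rockSoph_val i ▸ intv_eq_none_or_val (by rw [List.mem_singleton]; omega)
        (fun h => by have := Finset.mem_singleton.mp (hW' h); omega)
    rw [rockSoph_holds_iff (intv_binary (by simp) (by simp) rockSoph_val_le_one)]
    exact rockSol_getD_four_of_st (by simp [intv, xOf]) (hactual 2 (by omega))
      (hactual 3 (by omega)) (hactual 4 (by omega))

theorem rockSoph_not_AC2_billy : ¬ AC2 rockSoph [1] (.eq 4 1) [1] [1] := by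
  rintro ⟨W, x', w, -, -, -, hx', hw, ha, hb⟩
  have hZ : {3} \ W ⊆ (rockSoph.endo \ W) \ [1].toFinset := by
    intro i
    simp only [Finset.mem_sdiff, Finset.mem_singleton, List.toFinset_cons, List.toFinset_nil,
      insert_empty_eq, CM.endo, Finset.mem_range]
    rintro ⟨rfl, h3⟩
    exact ⟨⟨by decide, h3⟩, by decide⟩
  have hwbin : ∀ i ∈ W, w i ≤ 1 := fun i hi =>
    Nat.le_of_lt_succ ((hw i hi).trans_le (rockSoph_rV_getD_le i))
  have hx'bin : ∀ k < [1].length, x'.getD k 0 ≤ 1 := fun k hk =>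
    Nat.le_of_lt_succ ((hx' k hk).trans_le (rockSoph_rV_getD_le _))
  replace hb := hb W subset_rfl ({3} \ W) hZ
  rw [rockSoph_holds_iff (intv_binary hx'bin hwbin rockSoph_val_le_one)] at ha
  rw [rockSoph_holds_iff (intv_binary (by simp) hwbin rockSoph_val_le_one)] at hb
  -- `SH` is the same in both worlds, and so are `BH` if `3 ∈ W` and `BS` if `4 ∈ W`;
  -- otherwise `BH = 0` in `hb`, so `hb` forces `SH = 1`, which makes `BS = 1` in `ha` too.
  by_cases h4 : 4 ∈ W
  · simp_all [rockSol, intv]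
  by_cases h3 : 3 ∈ W
  · simp_all [rockSol, intv]
  · simp_all [rockSol, intv, rockSoph_val]

/-- In the sophisticated rock-throwing model, in the context `u = 1` (in which
both Suzy and Billy throw), `ST = 1` is a cause of `BS = 1`, but `BT = 1` is
not a cause of `BS = 1`, under the updated HP definition. -/
theorem rockSoph_suzy_not_billy :
    IsCause rockSoph [1] (CForm.eq 4 1) [0] [1] ∧
    ¬ IsCause rockSoph [1] (CForm.eq 4 1) [1] [1] :=
  ⟨⟨rockSoph_AC1_suzy, rockSoph_AC2_suzy, AC3_singleton _ _ _ _ _⟩,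
    fun h => rockSoph_not_AC2_billy h.2.1⟩
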